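/- Let m ≥ 1 and i ≥ 1 be integers. Let (Ω, F, ℙ) be a probability space with a filtration (F_t)_{t≥i} and let (d_t)_{t≥i} be an adapted, nonnegative process with d_t ≤ 2mt almost surely for every t ≥ i, and such that for every t ≥ i, E[exp(d_{t+1} - d_t) | F_t] ≤ (1 + (e - 1)·c_t)^m almost surely, where e is Euler's number. Then the process W_t := exp(d_t) / ∏_{l=i}^{t-1} (1 + (e-1)·c_l)^m, for t ≥ i, is a nonnegative supermartingale with respect to (F_t), and hence converges almost surely to a nonnegative random variable with finite mean. Moreover, ∑_{l=i}^{t-1} ln(1 + (e-1)·c_l) = O(ln t) as t → ∞. -/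

import Mathlib

open Filter MeasureTheory

/-- `c_l = (2ml+1)/(l(2ml+1-2m))`. -/
noncomputable def cPAAPA (m l : ℕ) : ℝ :=
  (2 * (m : ℝ) * l + 1) / ((l : ℝ) * (2 * (m : ℝ) * l + 1 - 2 * m))

/-!
With `b_l = (1 + (e - 1) c_l) ^ m` one has `W_{t+1} = (W_t / b_t) · exp (d_{t+1} - d_t)`, and the
first factor is `ℱ_t`-measurable: pulling it out of the conditional expectation and applying the
moment bound gives `E[W_{t+1} | ℱ_t] ≤ W_t`. The bounds `0 ≤ d_t ≤ 2mt` make `W_t` and the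
increments `exp (d_{t+1} - d_t)` integrable, as the pull-out property requires. A nonnegative
supermartingale is bounded in `L¹` by its initial mean, so Doob's convergence theorem applies.
Finally `log (1 + x) ≤ x` and `c_l ≤ (2m + 1) / l` bound the logarithmic sum by a multiple of the
harmonic number `H_t ≤ 1 + log t`.
-/

open Real

lemma cPAAPA_nonneg (m l : ℕ) : 0 ≤ cPAAPA m l := by
  unfold cPAAPA
  rcases Nat.eq_zero_or_pos l with rfl | hl
  · simp
  have hl : (1 : ℝ) ≤ l := by exact_mod_cast hl
  have : 2 * (m : ℝ) * l + 1 - 2 * m = 2 * m * (l - 1) + 1 := by ring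
  rw [this]
  positivity

-- At `l = 0` both sides are `0`, by the convention `x / 0 = 0`.
lemma cPAAPA_le_div (m l : ℕ) : cPAAPA m l ≤ (2 * m + 1) / l := by
  unfold cPAAPA
  rcases Nat.eq_zero_or_pos l with rfl | hl
  · simp
  have hl : (1 : ℝ) ≤ l := by exact_mod_cast hl
  have hden : 2 * (m : ℝ) * l + 1 - 2 * m = 2 * m * (l - 1) + 1 := by ring
  rw [hden, div_le_div_iff₀ (by positivity) (by positivity)]
  have : 0 ≤ (m : ℝ) * m * (l - 1) * l := by
    have : (0 : ℝ) ≤ l - 1 := by linarith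
    positivity
  nlinarith

lemma sum_Ico_inv_le_one_add_log (i t : ℕ) : ∑ l ∈ Finset.Ico i t, (l : ℝ)⁻¹ ≤ 1 + log t := by
  calc ∑ l ∈ Finset.Ico i t, (l : ℝ)⁻¹ ≤ ∑ l ∈ Finset.range (t + 1), (l : ℝ)⁻¹ :=
        Finset.sum_le_sum_of_subset_of_nonneg
          (fun l hl => Finset.mem_range.2 (by grind))
          fun _ _ _ => by positivity
    _ = harmonic t := by
        simp [Finset.sum_range_succ', harmonic]
    _ ≤ 1 + log t := harmonic_le_one_add_log t

lemma sum_log_one_add_le_mul_one_add_log {a : ℕ → ℝ} {K : ℝ} (ha : ∀ l, 0 ≤ a l)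
    (haK : ∀ l, a l ≤ K / l) (i t : ℕ) :
    ∑ l ∈ Finset.Ico i t, log (1 + a l) ≤ K * (1 + log t) := by
  have hK : 0 ≤ K := by simpa using (ha 1).trans (haK 1)
  calc ∑ l ∈ Finset.Ico i t, log (1 + a l) ≤ ∑ l ∈ Finset.Ico i t, K * (l : ℝ)⁻¹ := by
        refine Finset.sum_le_sum fun l _ => ?_
        calc log (1 + a l) ≤ a l := by
              linarith [log_le_sub_one_of_pos (by linarith [ha l] : 0 < 1 + a l)]
          _ ≤ K * (l : ℝ)⁻¹ := haK l
    _ ≤ K * (1 + log t) := by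
        rw [← Finset.mul_sum]
        exact mul_le_mul_of_nonneg_left (sum_Ico_inv_le_one_add_log i t) hK

lemma exists_sum_log_one_add_le_mul_log {a : ℕ → ℝ} {K : ℝ} (hK : 0 < K) (ha : ∀ l, 0 ≤ a l)
    (haK : ∀ l, a l ≤ K / l) (i : ℕ) :
    ∃ C : ℝ, 0 < C ∧ ∃ T : ℕ, ∀ t, T ≤ t →
      ∑ l ∈ Finset.Ico i t, log (1 + a l) ≤ C * log t := by
  refine ⟨2 * K, by positivity, 3, fun t ht => ?_⟩
  have hlog : 1 ≤ log t := by
    rw [le_log_iff_exp_le (by positivity)]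
    have : (3 : ℝ) ≤ t := by exact_mod_cast ht
    linarith [exp_one_lt_d9]
  nlinarith [sum_log_one_add_le_mul_one_add_log ha haK i t]

namespace MeasureTheory

variable {Ω : Type*} {m0 : MeasurableSpace Ω} {μ : Measure Ω}

lemma integrable_exp_of_ae_le [IsFiniteMeasure μ] {f : Ω → ℝ} {C : ℝ}
    (hf : AEStronglyMeasurable f μ) (hC : ∀ᵐ ω ∂μ, f ω ≤ C) :
    Integrable (fun ω => exp (f ω)) μ := by
  refine Integrable.of_bound (continuous_exp.comp_aestronglyMeasurable hf) (exp C) ?_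
  filter_upwards [hC] with ω hω
  rw [norm_of_nonneg (exp_pos _).le]
  exact exp_le_exp.2 hω

lemma condExp_mul_le_of_condExp_le {m : MeasurableSpace Ω} {f g : Ω → ℝ} {c : ℝ}
    (hf : StronglyMeasurable[m] f) (hf0 : 0 ≤ᵐ[μ] f) (hfg : Integrable (f * g) μ)
    (hg : Integrable g μ) (hgc : μ[g | m] ≤ᵐ[μ] fun _ => c) :
    μ[f * g | m] ≤ᵐ[μ] fun ω => f ω * c := by
  filter_upwards [condExp_mul_of_stronglyMeasurable_left hf hfg hg, hf0, hgc]
    with ω hpull hfω hgω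
  rw [hpull]
  exact mul_le_mul_of_nonneg_left hgω hfω

lemma Supermartingale.exists_ae_tendsto_of_nonneg [IsFiniteMeasure μ] {𝒢 : Filtration ℕ m0}
    {f : ℕ → Ω → ℝ} (hf : Supermartingale f 𝒢 μ) (hf0 : ∀ n, 0 ≤ᵐ[μ] f n) :
    ∃ X : Ω → ℝ, Integrable X μ ∧
      ∀ᵐ ω ∂μ, 0 ≤ X ω ∧ Tendsto (fun n => f n ω) atTop (nhds (X ω)) := by
  have hbdd : ∀ n, eLpNorm ((-f) n) 1 μ ≤ ENNReal.ofReal (∫ ω, f 0 ω ∂μ) := by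
    intro n
    rw [Pi.neg_apply, eLpNorm_neg, eLpNorm_one_eq_lintegral_enorm,
      ← ofReal_integral_norm_eq_lintegral_enorm (hf.integrable n),
      integral_congr_ae ((hf0 n).mono fun ω hω => norm_of_nonneg hω)]
    refine ENNReal.ofReal_le_ofReal ?_
    simpa using hf.setIntegral_le (Nat.zero_le n) MeasurableSet.univ
  have hneg : Submartingale (-f) 𝒢 μ := hf.neg
  refine ⟨-(𝒢.limitProcess (-f) μ),
    (memLp_one_iff_integrable.1 (hneg.memLp_limitProcess hbdd)).neg, ?_⟩
  filter_upwards [hneg.ae_tendsto_limitProcess hbdd, ae_all_iff.2 hf0] with ω hω hω0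
  have hlim : Tendsto (fun n => f n ω) atTop (nhds (-(𝒢.limitProcess (-f) μ ω))) := by
    simpa using hω.neg
  exact ⟨ge_of_tendsto' hlim hω0, hlim⟩

def Filtration.shift (ℱ : Filtration ℕ m0) (k : ℕ) : Filtration ℕ m0 where
  seq n := ℱ (k + n)
  mono' _ _ h := ℱ.mono (Nat.add_le_add_left h k)
  le' n := ℱ.le (k + n)

lemma exists_ae_tendsto_of_nonneg_of_condExp_succ_le [IsFiniteMeasure μ] {ℱ : Filtration ℕ m0}
    {W : ℕ → Ω → ℝ} (i : ℕ) (hadp : StronglyAdapted ℱ W) (h0 : ∀ t, 0 ≤ᵐ[μ] W t)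
    (hint : ∀ t, i ≤ t → Integrable (W t) μ)
    (hsuper : ∀ t, i ≤ t → μ[W (t + 1) | ℱ t] ≤ᵐ[μ] W t) :
    ∃ X : Ω → ℝ, Integrable X μ ∧
      ∀ᵐ ω ∂μ, 0 ≤ X ω ∧ Tendsto (fun t => W t ω) atTop (nhds (X ω)) := by
  have hshift : Supermartingale (fun n => W (i + n)) (ℱ.shift i) μ :=
    supermartingale_nat (fun n => hadp (i + n)) (fun n => hint _ (Nat.le_add_right i n))
      fun n => hsuper _ (Nat.le_add_right i n)
  obtain ⟨X, hX, hlim⟩ := hshift.exists_ae_tendsto_of_nonneg fun n => h0 (i + n)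
  refine ⟨X, hX, hlim.mono fun ω ⟨hX0, hω⟩ => ⟨hX0, ?_⟩⟩
  simp_rw [add_comm i] at hω
  exact (tendsto_add_atTop_iff_nat i).1 hω

lemma condExp_exp_div_prod_le {ℱ : Filtration ℕ m0} {d : ℕ → Ω → ℝ} {b : ℕ → ℝ}
    (hb : ∀ l, 0 < b l) (hd : Adapted ℱ d) {i t : ℕ} (ht : i ≤ t)
    (hint : Integrable (fun ω => exp (d (t + 1) ω) / ∏ l ∈ Finset.Ico i (t + 1), b l) μ)
    (hg : Integrable (fun ω => exp (d (t + 1) ω - d t ω)) μ)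
    (hmgf : μ[fun ω => exp (d (t + 1) ω - d t ω) | ℱ t] ≤ᵐ[μ] fun _ => b t) :
    μ[fun ω => exp (d (t + 1) ω) / ∏ l ∈ Finset.Ico i (t + 1), b l | ℱ t] ≤ᵐ[μ]
      fun ω => exp (d t ω) / ∏ l ∈ Finset.Ico i t, b l := by
  have hP : 0 < ∏ l ∈ Finset.Ico i t, b l := Finset.prod_pos fun l _ => hb l
  have hsplit : (fun ω => exp (d (t + 1) ω) / ∏ l ∈ Finset.Ico i (t + 1), b l) =
      (fun ω => (exp (d t ω) / ∏ l ∈ Finset.Ico i t, b l) / b t) *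
        fun ω => exp (d (t + 1) ω - d t ω) := by
    funext ω
    rw [Pi.mul_apply, Finset.prod_Ico_succ_top ht, exp_sub]
    field_simp [(hb t).ne', hP.ne']
  rw [hsplit] at hint ⊢
  refine (condExp_mul_le_of_condExp_le ?_ ?_ hint hg hmgf).trans
    (Eventually.of_forall fun ω => (div_mul_cancel₀ _ (hb t).ne').le)
  · exact (((hd t).exp.div_const _).div_const _).stronglyMeasurable
  · exact Eventually.of_forall fun ω => by
      dsimp
      exact div_nonneg (div_pos (exp_pos _) hP).le (hb t).le

end MeasureTheory

theorem pa_apa_pure_anti_exp_supermartingale_general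
    {Ω : Type*} {m0 : MeasurableSpace Ω} (μ : Measure Ω) [IsProbabilityMeasure μ]
    (ℱ : Filtration ℕ m0) (m i : ℕ)
    (d : ℕ → Ω → ℝ) (hadapted : Adapted ℱ d)
    (hnonneg : ∀ t, i ≤ t → 0 ≤ᵐ[μ] d t)
    (hbound : ∀ t, i ≤ t → ∀ᵐ ω ∂μ, d t ω ≤ 2 * (m : ℝ) * t)
    (hmgf : ∀ t, i ≤ t →
      μ[fun ω => Real.exp (d (t + 1) ω - d t ω) | ℱ t] ≤ᵐ[μ]
        fun _ => (1 + (Real.exp 1 - 1) * cPAAPA m t) ^ m) :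
    (∀ t, i ≤ t →
      (0 ≤ᵐ[μ] fun ω =>
        Real.exp (d t ω) /
          ∏ l ∈ Finset.Ico i t, (1 + (Real.exp 1 - 1) * cPAAPA m l) ^ m) ∧
      Integrable (fun ω =>
        Real.exp (d t ω) /
          ∏ l ∈ Finset.Ico i t, (1 + (Real.exp 1 - 1) * cPAAPA m l) ^ m) μ ∧
      μ[fun ω =>
          Real.exp (d (t + 1) ω) /
            ∏ l ∈ Finset.Ico i (t + 1), (1 + (Real.exp 1 - 1) * cPAAPA m l) ^ m
        | ℱ t] ≤ᵐ[μ]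
        fun ω =>
          Real.exp (d t ω) /
            ∏ l ∈ Finset.Ico i t, (1 + (Real.exp 1 - 1) * cPAAPA m l) ^ m) ∧
    (∃ X : Ω → ℝ, Integrable X μ ∧
      ∀ᵐ ω ∂μ, 0 ≤ X ω ∧
        Tendsto (fun t : ℕ =>
            Real.exp (d t ω) /
              ∏ l ∈ Finset.Ico i t, (1 + (Real.exp 1 - 1) * cPAAPA m l) ^ m)
          atTop (nhds (X ω))) ∧
    (∃ C : ℝ, 0 < C ∧ ∃ T : ℕ, ∀ t, T ≤ t →
      ∑ l ∈ Finset.Ico i t, Real.log (1 + (Real.exp 1 - 1) * cPAAPA m l) ≤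
        C * Real.log t) := by
  have he : 0 < exp 1 - 1 := by linarith [add_one_lt_exp one_ne_zero]
  have ha : ∀ l, 0 ≤ (exp 1 - 1) * cPAAPA m l := fun l => by
    have := cPAAPA_nonneg m l
    positivity
  set b : ℕ → ℝ := fun l => (1 + (exp 1 - 1) * cPAAPA m l) ^ m
  have hb : ∀ l, 0 < b l := fun l => by
    have := ha l
    positivity
  set W : ℕ → Ω → ℝ := fun t ω => exp (d t ω) / ∏ l ∈ Finset.Ico i t, b l
  have hW0 : ∀ t, 0 ≤ᵐ[μ] W t := fun t => Eventually.of_forall fun ω =>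
    (div_pos (exp_pos _) (Finset.prod_pos fun l _ => hb l)).le
  have hd : ∀ t, Measurable (d t) := fun t => (hadapted t).mono (ℱ.le t) le_rfl
  have hWint : ∀ t, i ≤ t → Integrable (W t) μ := fun t ht =>
    (integrable_exp_of_ae_le (hd t).aestronglyMeasurable (hbound t ht)).div_const _
  have hincr : ∀ t, i ≤ t → Integrable (fun ω => exp (d (t + 1) ω - d t ω)) μ := by
    intro t ht
    refine integrable_exp_of_ae_le ((hd (t + 1)).sub (hd t)).aestronglyMeasurable
      (C := 2 * m * (t + 1)) ?_
    filter_upwards [hbound (t + 1) (ht.trans t.le_succ), hnonneg t ht] with ω h1 (h2 : 0 ≤ d t ω)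
    push_cast at h1
    linarith
  have hsuper : ∀ t, i ≤ t → μ[W (t + 1) | ℱ t] ≤ᵐ[μ] W t := fun t ht =>
    condExp_exp_div_prod_le hb hadapted ht (hWint _ (ht.trans t.le_succ)) (hincr t ht) (hmgf t ht)
  refine ⟨fun t ht => ⟨hW0 t, hWint t ht, hsuper t ht⟩,
    exists_ae_tendsto_of_nonneg_of_condExp_succ_le i
      (fun t => ((hadapted t).exp.div_const _).stronglyMeasurable) hW0 hWint hsuper,
    exists_sum_log_one_add_le_mul_log (K := (exp 1 - 1) * (2 * m + 1)) (by positivity) ha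
      (fun l => ?_) i⟩
  rw [mul_div_assoc]
  exact mul_le_mul_of_nonneg_left (cPAAPA_le_div m l) he.le

/-- Key steps in the proof of Theorem 3.10 of the paper: the process
`W_t = exp(d_t) / ∏_{l=i}^{t-1} (1 + (e-1) c_l)^m` is a nonnegative supermartingale,
hence converges almost surely to a nonnegative random variable with finite mean;
moreover `∑_{l=i}^{t-1} ln(1 + (e-1) c_l) = O(ln t)`. -/
theorem pa_apa_pure_anti_exp_supermartingale
    {Ω : Type*} {m0 : MeasurableSpace Ω} (μ : Measure Ω) [IsProbabilityMeasure μ]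
    (ℱ : Filtration ℕ m0) (m i : ℕ) (hm : 1 ≤ m) (hi : 1 ≤ i)
    (d : ℕ → Ω → ℝ) (hadapted : Adapted ℱ d)
    (hnonneg : ∀ t, i ≤ t → 0 ≤ᵐ[μ] d t)
    (hbound : ∀ t, i ≤ t → ∀ᵐ ω ∂μ, d t ω ≤ 2 * (m : ℝ) * t)
    (hmgf : ∀ t, i ≤ t →
      μ[fun ω => Real.exp (d (t + 1) ω - d t ω) | ℱ t] ≤ᵐ[μ]
        fun _ => (1 + (Real.exp 1 - 1) * cPAAPA m t) ^ m) :
    (∀ t, i ≤ t →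
      (0 ≤ᵐ[μ] fun ω =>
        Real.exp (d t ω) /
          ∏ l ∈ Finset.Ico i t, (1 + (Real.exp 1 - 1) * cPAAPA m l) ^ m) ∧
      Integrable (fun ω =>
        Real.exp (d t ω) /
          ∏ l ∈ Finset.Ico i t, (1 + (Real.exp 1 - 1) * cPAAPA m l) ^ m) μ ∧
      μ[fun ω =>
          Real.exp (d (t + 1) ω) /
            ∏ l ∈ Finset.Ico i (t + 1), (1 + (Real.exp 1 - 1) * cPAAPA m l) ^ m
        | ℱ t] ≤ᵐ[μ]
        fun ω =>
          Real.exp (d t ω) /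
            ∏ l ∈ Finset.Ico i t, (1 + (Real.exp 1 - 1) * cPAAPA m l) ^ m) ∧
    (∃ X : Ω → ℝ, Integrable X μ ∧
      ∀ᵐ ω ∂μ, 0 ≤ X ω ∧
        Tendsto (fun t : ℕ =>
            Real.exp (d t ω) /
              ∏ l ∈ Finset.Ico i t, (1 + (Real.exp 1 - 1) * cPAAPA m l) ^ m)
          atTop (nhds (X ω))) ∧
    (∃ C : ℝ, 0 < C ∧ ∃ T : ℕ, ∀ t, T ≤ t →
      ∑ l ∈ Finset.Ico i t, Real.log (1 + (Real.exp 1 - 1) * cPAAPA m l) ≤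
        C * Real.log t) :=
  pa_apa_pure_anti_exp_supermartingale_general μ ℱ m i d hadapted hnonneg hbound hmgf
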